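/- arXiv:2604.02041 — 2 statements merged into one kernel-verified Lean document; each statement's English description precedes it below -/
import Mathlib

section
/- For all natural numbers m, n, the Hermite functions are orthonormal in L²(ℝ): ∫_{−∞}^{∞} ψ_m(x) ψ_n(x) dx = δ_{m,n}. -/
open Real MeasureTheory Filter Set

/-- Physicists' Hermite polynomials, as real functions. -/
noncomputable def H : ℕ → ℝ → ℝ
  | 0, _ => 1
  | 1, x => 2 * x
  | (n + 2), x => 2 * x * H (n + 1) x - 2 * ((n : ℝ) + 1) * H n x

/-- Hermite functions. -/
noncomputable def ψ (n : ℕ) (x : ℝ) : ℝ :=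
  (Real.sqrt ((2 : ℝ) ^ n * (n.factorial : ℝ) * Real.sqrt Real.pi))⁻¹ *
    Real.exp (-x ^ 2 / 2) * H n x

/-! ### Auxiliary bounds for monomials times a Gaussian -/

lemma pow_le_factorial_mul_exp (k : ℕ) {x : ℝ} (hx : 0 ≤ x) :
    x ^ k ≤ (k.factorial : ℝ) * Real.exp x := by
  have h1 : x ^ k / (k.factorial : ℝ) ≤ Real.exp x := by
    calc x ^ k / (k.factorial : ℝ)
        ≤ ∑ i ∈ Finset.range (k + 1), x ^ i / (i.factorial : ℝ) := by
          refine Finset.single_le_sum (f := fun i => x ^ i / (i.factorial : ℝ)) ?_ ?_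
          · intro i _; positivity
          · simp
      _ ≤ Real.exp x := Real.sum_le_exp_of_nonneg hx _
  have hk : (0:ℝ) < (k.factorial : ℝ) := by positivity
  calc x ^ k = x ^ k / (k.factorial : ℝ) * (k.factorial : ℝ) := by field_simp
    _ ≤ Real.exp x * (k.factorial : ℝ) := by
        exact mul_le_mul_of_nonneg_right h1 hk.le
    _ = (k.factorial : ℝ) * Real.exp x := by ring

lemma abs_pow_mul_exp_le (k : ℕ) (x : ℝ) :
    ‖x ^ k * Real.exp (-x ^ 2)‖ ≤
      (k.factorial : ℝ) * Real.exp (1/2) * Real.exp (-(1/2) * x ^ 2) := by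
  have h1 : ‖x ^ k * Real.exp (-x ^ 2)‖ = |x| ^ k * Real.exp (-x ^ 2) := by
    rw [norm_mul, Real.norm_eq_abs, Real.norm_eq_abs, abs_pow,
      abs_of_pos (Real.exp_pos _)]
  rw [h1]
  have h2 : |x| ^ k ≤ (k.factorial : ℝ) * Real.exp |x| :=
    pow_le_factorial_mul_exp k (abs_nonneg x)
  have h3 : |x| ^ k * Real.exp (-x ^ 2) ≤
      (k.factorial : ℝ) * Real.exp |x| * Real.exp (-x ^ 2) :=
    mul_le_mul_of_nonneg_right h2 (Real.exp_pos _).le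
  refine h3.trans ?_
  rw [mul_assoc, mul_assoc, ← Real.exp_add, ← Real.exp_add]
  refine mul_le_mul_of_nonneg_left (Real.exp_le_exp.2 ?_) (by positivity)
  have habs : |x| ≤ x ^ 2 / 2 + 1 / 2 := by
    have h4 := sq_nonneg (|x| - 1)
    have h5 : |x| ^ 2 = x ^ 2 := sq_abs x
    nlinarith
  linarith

lemma integrable_pow_gauss (k : ℕ) :
    Integrable fun x : ℝ => x ^ k * Real.exp (-x ^ 2) := by
  have hg : Integrable fun x : ℝ =>
      (k.factorial : ℝ) * Real.exp (1/2) * Real.exp (-(1/2) * x ^ 2) :=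
    (integrable_exp_neg_mul_sq (by norm_num : (0:ℝ) < 1/2)).const_mul _
  refine hg.mono' ?_ ?_
  · exact ((continuous_pow k).mul (Real.continuous_exp.comp
      (continuous_pow 2).neg)).aestronglyMeasurable
  · exact Filter.Eventually.of_forall fun x => abs_pow_mul_exp_le k x

lemma tendsto_exp_neg_half_sq {l : Filter ℝ} (hl : Tendsto (fun x : ℝ => x ^ 2) l atTop) :
    Tendsto (fun x : ℝ => Real.exp (-(1/2) * x ^ 2)) l (nhds 0) := by
  have h1 : Tendsto (fun x : ℝ => (1/2) * x ^ 2) l atTop :=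
    hl.const_mul_atTop (by norm_num)
  have h2 : Tendsto (fun x : ℝ => -((1/2) * x ^ 2)) l atBot :=
    tendsto_neg_atTop_atBot.comp h1
  have h3 := Real.tendsto_exp_atBot.comp h2
  refine h3.congr fun x => ?_
  simp only [Function.comp]
  ring_nf

lemma tendsto_pow_gauss {l : Filter ℝ} (hl : Tendsto (fun x : ℝ => x ^ 2) l atTop) (k : ℕ) :
    Tendsto (fun x : ℝ => x ^ k * Real.exp (-x ^ 2)) l (nhds 0) := by
  have hg : Tendsto (fun x : ℝ =>
      (k.factorial : ℝ) * Real.exp (1/2) * Real.exp (-(1/2) * x ^ 2)) l (nhds 0) := by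
    have := (tendsto_exp_neg_half_sq hl).const_mul ((k.factorial : ℝ) * Real.exp (1/2))
    simpa using this
  exact squeeze_zero_norm (fun x => abs_pow_mul_exp_le k x) hg

lemma sq_tendsto_atTop : Tendsto (fun x : ℝ => x ^ 2) atTop atTop :=
  tendsto_pow_atTop two_ne_zero

lemma sq_tendsto_atBot : Tendsto (fun x : ℝ => x ^ 2) atBot atTop := by
  have : (fun x : ℝ => x ^ 2) = (fun x : ℝ => x ^ 2) ∘ (fun x : ℝ => -x) := by
    funext x; simp
  rw [this]
  exact sq_tendsto_atTop.comp tendsto_neg_atBot_atTop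

/-! ### Polynomial times Gaussian -/

lemma integrable_poly_gauss (P : Polynomial ℝ) :
    Integrable fun x : ℝ => P.eval x * Real.exp (-x ^ 2) := by
  have h : (fun x : ℝ => P.eval x * Real.exp (-x ^ 2)) =
      fun x => ∑ i ∈ Finset.range (P.natDegree + 1),
        P.coeff i * (x ^ i * Real.exp (-x ^ 2)) := by
    funext x
    rw [Polynomial.eval_eq_sum_range, Finset.sum_mul]
    simp [mul_assoc]
  rw [h]
  exact integrable_finset_sum _ fun i _ => (integrable_pow_gauss i).const_mul _

lemma tendsto_poly_gauss (P : Polynomial ℝ) {l : Filter ℝ}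
    (hl : Tendsto (fun x : ℝ => x ^ 2) l atTop) :
    Tendsto (fun x : ℝ => P.eval x * Real.exp (-x ^ 2)) l (nhds 0) := by
  have h : (fun x : ℝ => P.eval x * Real.exp (-x ^ 2)) =
      fun x => ∑ i ∈ Finset.range (P.natDegree + 1),
        P.coeff i * (x ^ i * Real.exp (-x ^ 2)) := by
    funext x
    rw [Polynomial.eval_eq_sum_range, Finset.sum_mul]
    simp [mul_assoc]
  rw [h]
  have := tendsto_finset_sum (Finset.range (P.natDegree + 1))
    (fun i _ => ((tendsto_pow_gauss hl i).const_mul (P.coeff i)))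
  simpa using this

/-! ### Structure of `H` -/

/-- Polynomial representation of physicists' Hermite polynomials. -/
noncomputable def Hpoly : ℕ → Polynomial ℝ
  | 0 => 1
  | 1 => Polynomial.C 2 * Polynomial.X
  | (n + 2) => Polynomial.C 2 * Polynomial.X * Hpoly (n + 1)
      - Polynomial.C (2 * ((n : ℝ) + 1)) * Hpoly n

lemma H_eq_eval (n : ℕ) : ∀ x, H n x = (Hpoly n).eval x := by
  induction n using Nat.strong_induction_on with
  | _ n ih =>
    match n with
    | 0 => intro x; simp [H, Hpoly]
    | 1 => intro x; simp [H, Hpoly]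
    | (n + 2) =>
      intro x
      simp only [H, Hpoly, Polynomial.eval_sub, Polynomial.eval_mul, Polynomial.eval_C,
        Polynomial.eval_X, ih (n + 1) (by omega), ih n (by omega)]

/-- Derivative of `H n`. -/
noncomputable def D (n : ℕ) (x : ℝ) : ℝ := 2 * (n : ℝ) * H (n - 1) x

lemma H_succ (n : ℕ) (x : ℝ) : H (n + 1) x = 2 * x * H n x - D n x := by
  cases n with
  | zero => simp [H, D]
  | succ m => simp only [H, D, Nat.add_sub_cancel]; push_cast; ring

lemma H_hasDerivAt (n : ℕ) : ∀ x, HasDerivAt (H n) (D n x) x := by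
  induction n using Nat.strong_induction_on with
  | _ n ih =>
    match n with
    | 0 =>
      intro x
      have : H 0 = fun _ : ℝ => (1:ℝ) := rfl
      rw [this]
      simpa [D, H] using hasDerivAt_const x (1:ℝ)
    | 1 =>
      intro x
      have h : H 1 = fun x : ℝ => 2 * x := rfl
      rw [h]
      have := (hasDerivAt_id x).const_mul (2:ℝ)
      simpa [D, H] using this
    | (n + 2) =>
      intro x
      have h : H (n + 2) = fun x : ℝ =>
          2 * x * H (n + 1) x - 2 * ((n : ℝ) + 1) * H n x := rfl
      rw [h]
      have h1 : HasDerivAt (fun x : ℝ => 2 * x * H (n + 1) x)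
          (2 * H (n + 1) x + 2 * x * D (n + 1) x) x := by
        have := ((hasDerivAt_id x).const_mul (2:ℝ)).mul (ih (n + 1) (by omega) x)
        refine this.congr_deriv ?_
        simp only [id_eq]
        ring
      have h2 : HasDerivAt (fun x : ℝ => 2 * ((n : ℝ) + 1) * H n x)
          (2 * ((n : ℝ) + 1) * D n x) x := (ih n (by omega) x).const_mul _
      have h3 := h1.sub h2
      refine h3.congr_deriv ?_
      have hD1 : D (n + 1) x = 2 * ((n : ℝ) + 1) * H n x := by
        simp only [D, Nat.add_sub_cancel]; push_cast; ring
      have hs := H_succ n x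
      have hD2 : D (n + 2) x = 2 * ((n : ℝ) + 2) * H (n + 1) x := by
        simp only [D, Nat.add_sub_cancel]; push_cast; ring
      rw [hD2, hD1]
      have hs1 := H_succ n x
      -- goal: 2*(n+2)*H(n+1)x = (2*H(n+1)x + 2*x*(2*(n+1)*H n x)) - 2*(n+1)*D n x
      have : H (n + 1) x = 2 * x * H n x - D n x := hs1
      rw [this]
      ring

lemma H_continuous (n : ℕ) : Continuous (H n) :=
  continuous_iff_continuousAt.2 fun x => (H_hasDerivAt n x).continuousAt

/-! ### The integrals -/

noncomputable def Igauss (m n : ℕ) : ℝ := ∫ x : ℝ, H m x * H n x * Real.exp (-x ^ 2)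

lemma HH_eq_poly (m n : ℕ) (x : ℝ) :
    H m x * H n x * Real.exp (-x ^ 2) = (Hpoly m * Hpoly n).eval x * Real.exp (-x ^ 2) := by
  rw [Polynomial.eval_mul, H_eq_eval m, H_eq_eval n]

lemma integrable_HH (m n : ℕ) :
    Integrable fun x : ℝ => H m x * H n x * Real.exp (-x ^ 2) := by
  have := integrable_poly_gauss (Hpoly m * Hpoly n)
  refine this.congr ?_
  exact Filter.Eventually.of_forall fun x => (HH_eq_poly m n x).symm

lemma integrable_DH (m n : ℕ) :
    Integrable fun x : ℝ => D m x * H n x * Real.exp (-x ^ 2) := by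
  have h : ∀ x : ℝ, D m x * H n x * Real.exp (-x ^ 2)
      = 2 * (m : ℝ) * (H (m - 1) x * H n x * Real.exp (-x ^ 2)) := by
    intro x; simp only [D]; ring
  simp only [h]
  exact (integrable_HH (m - 1) n).const_mul _

lemma tendsto_HH {l : Filter ℝ} (hl : Tendsto (fun x : ℝ => x ^ 2) l atTop) (m n : ℕ) :
    Tendsto (fun x : ℝ => H m x * H n x * Real.exp (-x ^ 2)) l (nhds 0) := by
  have := tendsto_poly_gauss (Hpoly m * Hpoly n) hl
  refine this.congr ?_
  exact fun x => (HH_eq_poly m n x).symm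

lemma hasDerivAt_g (m n : ℕ) (x : ℝ) :
    HasDerivAt (fun x : ℝ => H m x * H n x * Real.exp (-x ^ 2))
      (D m x * H n x * Real.exp (-x ^ 2)
        - H m x * H (n + 1) x * Real.exp (-x ^ 2)) x := by
  have hE : HasDerivAt (fun x : ℝ => Real.exp (-x ^ 2))
      (-(2 * x) * Real.exp (-x ^ 2)) x := by
    have h1 : HasDerivAt (fun x : ℝ => -x ^ 2) (-(2 * x)) x := by
      exact (hasDerivAt_pow 2 x).neg.congr_deriv (by norm_num)
    have := (Real.hasDerivAt_exp (-x ^ 2)).comp x h1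
    refine this.congr_deriv ?_
    ring
  have h := ((H_hasDerivAt m x).mul (H_hasDerivAt n x)).mul hE
  refine h.congr_deriv ?_
  have hs := H_succ n x
  rw [hs, Pi.mul_apply]
  ring

lemma integral_deriv_eq_zero (m n : ℕ) :
    ∫ x : ℝ, (D m x * H n x * Real.exp (-x ^ 2)
      - H m x * H (n + 1) x * Real.exp (-x ^ 2)) = 0 := by
  set f := fun x : ℝ => H m x * H n x * Real.exp (-x ^ 2) with hf
  set f' := fun x : ℝ => D m x * H n x * Real.exp (-x ^ 2)
      - H m x * H (n + 1) x * Real.exp (-x ^ 2) with hf'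
  have hint : Integrable f' := (integrable_DH m n).sub (integrable_HH m (n + 1))
  have htop : Tendsto f atTop (nhds 0) := tendsto_HH sq_tendsto_atTop m n
  have hbot : Tendsto f atBot (nhds 0) := tendsto_HH sq_tendsto_atBot m n
  have hIoi : ∫ x in Ioi (0:ℝ), f' x = 0 - f 0 :=
    integral_Ioi_of_hasDerivAt_of_tendsto' (fun x _ => hasDerivAt_g m n x)
      hint.integrableOn htop
  have hIic : ∫ x in Iic (0:ℝ), f' x = f 0 - 0 :=
    integral_Iic_of_hasDerivAt_of_tendsto' (fun x _ => hasDerivAt_g m n x)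
      hint.integrableOn hbot
  have hsplit := intervalIntegral.integral_Iic_add_Ioi (μ := volume) (b := (0:ℝ))
    (f := f') hint.integrableOn hint.integrableOn
  rw [hIoi, hIic] at hsplit
  have hgoal : ∫ x : ℝ, f' x = 0 := by linarith
  exact hgoal

lemma Igauss_step (m n : ℕ) :
    Igauss m (n + 1) = 2 * (m : ℝ) * Igauss (m - 1) n := by
  have h0 := integral_deriv_eq_zero m n
  rw [integral_sub (integrable_DH m n) (integrable_HH m (n + 1))] at h0
  have h1 : ∫ x : ℝ, D m x * H n x * Real.exp (-x ^ 2)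
      = 2 * (m : ℝ) * Igauss (m - 1) n := by
    rw [Igauss, ← MeasureTheory.integral_const_mul]
    congr 1
    funext x
    simp only [D]; ring
  have h2 : Igauss m (n + 1) = ∫ x : ℝ, H m x * H (n + 1) x * Real.exp (-x ^ 2) := rfl
  rw [h2, ← h1]
  linarith

lemma Igauss_symm (m n : ℕ) : Igauss m n = Igauss n m := by
  unfold Igauss
  congr 1
  funext x
  ring

lemma Igauss_zero_zero : Igauss 0 0 = Real.sqrt Real.pi := by
  have h : Igauss 0 0 = ∫ x : ℝ, Real.exp (-1 * x ^ 2) := by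
    unfold Igauss
    congr 1
    funext x
    have : H 0 x = 1 := rfl
    rw [this]
    ring_nf
  rw [h, integral_gaussian]
  norm_num

lemma Igauss_eq (n : ℕ) : ∀ m, Igauss m n =
    if m = n then 2 ^ n * (n.factorial : ℝ) * Real.sqrt Real.pi else 0 := by
  induction n with
  | zero =>
    intro m
    cases m with
    | zero => simpa using Igauss_zero_zero
    | succ k =>
      rw [Igauss_symm, Igauss_step]
      simp
  | succ n ih =>
    intro m
    cases m with
    | zero =>
      rw [Igauss_step]
      simp
    | succ k =>
      rw [Igauss_step, Nat.add_sub_cancel, ih k]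
      by_cases hk : k = n
      · subst hk
        simp only [if_pos rfl, if_pos rfl]
        rw [Nat.factorial_succ]
        push_cast
        ring
      · have : ¬ (k + 1 = n + 1) := by omega
        simp [hk, this]

theorem hermite_functions_orthonormal (m n : ℕ) :
    ∫ x : ℝ, ψ m x * ψ n x = if m = n then (1 : ℝ) else 0 := by
  set cm := (Real.sqrt ((2 : ℝ) ^ m * (m.factorial : ℝ) * Real.sqrt Real.pi))⁻¹ with hcm
  set cn := (Real.sqrt ((2 : ℝ) ^ n * (n.factorial : ℝ) * Real.sqrt Real.pi))⁻¹ with hcn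
  have hpt : ∀ x : ℝ, ψ m x * ψ n x
      = cm * cn * (H m x * H n x * Real.exp (-x ^ 2)) := by
    intro x
    have hexp : Real.exp (-x ^ 2 / 2) * Real.exp (-x ^ 2 / 2) = Real.exp (-x ^ 2) := by
      rw [← Real.exp_add]; ring_nf
    simp only [ψ, ← hcm, ← hcn]
    calc cm * Real.exp (-x ^ 2 / 2) * H m x * (cn * Real.exp (-x ^ 2 / 2) * H n x)
        = cm * cn * (H m x * H n x) *
            (Real.exp (-x ^ 2 / 2) * Real.exp (-x ^ 2 / 2)) := by ring
      _ = cm * cn * (H m x * H n x * Real.exp (-x ^ 2)) := by rw [hexp]; ring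
  have : ∫ x : ℝ, ψ m x * ψ n x = cm * cn * Igauss m n := by
    simp only [hpt]
    rw [MeasureTheory.integral_const_mul]
    rfl
  rw [this, Igauss_eq n m]
  by_cases h : m = n
  · subst h
    rw [if_pos rfl, if_pos rfl]
    have hpos : (0:ℝ) < 2 ^ m * (m.factorial : ℝ) * Real.sqrt Real.pi := by
      have : (0:ℝ) < Real.sqrt Real.pi := Real.sqrt_pos.2 Real.pi_pos
      positivity
    rw [hcm, ← mul_inv]
    rw [Real.mul_self_sqrt hpos.le]
    field_simp
  · simp [h]
end

section
/- Orthogonal factorization of the Hermite transform: with T_{ij} = ψ_j(x_i), D the diagonal matrix with D_{jj} = √N |ψ_{N−1}(x_j)|, and Q_{kj} = ψ_k(x_j)/(√N |ψ_{N−1}(x_j)|), one has T = D Qᵀ and T^{−1} = Q D^{−1}, where Q is orthogonal. -/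
noncomputable def hc (k : ℕ) : ℝ := ((2 : ℝ) ^ k * (k.factorial : ℝ))⁻¹

lemma hc_pos (k : ℕ) : 0 < hc k := by
  unfold hc; positivity

lemma hc_succ (m : ℕ) : hc m = 2 * ((m : ℝ) + 1) * hc (m + 1) := by
  unfold hc
  rw [pow_succ, Nat.factorial_succ]
  push_cast
  field_simp

lemma H_zero (x : ℝ) : H 0 x = 1 := rfl
lemma H_one (x : ℝ) : H 1 x = 2 * x := rfl

lemma H_rec (m : ℕ) (x : ℝ) :
    H (m + 2) x = 2 * x * H (m + 1) x - 2 * ((m : ℝ) + 1) * H m x := by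
  rfl

lemma H_rec' (m : ℕ) (x : ℝ) :
    H (m + 1) x = 2 * x * H m x - 2 * (m : ℝ) * H (m - 1) x := by
  cases m with
  | zero => simp [H]
  | succ n => rw [H_rec]; push_cast; simp

/-- Christoffel–Darboux. -/
lemma CD (m : ℕ) (x y : ℝ) :
    (x - y) * ∑ k ∈ Finset.range (m + 1), hc k * H k x * H k y =
      hc m / 2 * (H (m + 1) x * H m y - H m x * H (m + 1) y) := by
  induction m with
  | zero => simp [H, hc]; ring
  | succ n ih =>
    rw [Finset.sum_range_succ, mul_add, ih, H_rec, H_rec,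
      hc_succ n]
    ring

/-- Confluent Christoffel–Darboux. -/
lemma CDc (m : ℕ) (x : ℝ) :
    ∑ k ∈ Finset.range (m + 1), hc k * H k x ^ 2 =
      ((m : ℝ) + 1) * hc m * H m x ^ 2
        - (m : ℝ) * hc m * H (m - 1) x * H (m + 1) x := by
  induction m with
  | zero =>
    rw [Finset.sum_range_one]
    rw [H_zero]
    push_cast
    ring
  | succ n ih =>
    rw [Finset.sum_range_succ, ih]
    have h1 := H_rec' n x
    have h2 := H_rec n x
    have hcs := hc_succ n
    push_cast
    rw [h2, hcs]
    linear_combination -(((n:ℝ) + 1) * hc (n + 1) * H (n + 1) x) * h1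

lemma psi_mul (k : ℕ) (a b : ℝ) :
    ψ k a * ψ k b =
      (Real.sqrt Real.pi)⁻¹ * Real.exp (-(a ^ 2 + b ^ 2) / 2) *
        (hc k * (H k a * H k b)) := by
  unfold ψ
  have hs : Real.sqrt ((2 : ℝ) ^ k * (k.factorial : ℝ) * Real.sqrt Real.pi) ^ 2
      = (2 : ℝ) ^ k * (k.factorial : ℝ) * Real.sqrt Real.pi :=
    Real.sq_sqrt (by positivity)
  have he : Real.exp (-a ^ 2 / 2) * Real.exp (-b ^ 2 / 2)
      = Real.exp (-(a ^ 2 + b ^ 2) / 2) := by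
    rw [← Real.exp_add]; ring_nf
  have key : (Real.sqrt ((2 : ℝ) ^ k * (k.factorial : ℝ) * Real.sqrt Real.pi))⁻¹ *
      (Real.sqrt ((2 : ℝ) ^ k * (k.factorial : ℝ) * Real.sqrt Real.pi))⁻¹
      = hc k * (Real.sqrt Real.pi)⁻¹ := by
    rw [← mul_inv, ← sq, hs]
    unfold hc
    rw [mul_inv]
  calc (Real.sqrt ((2 : ℝ) ^ k * (k.factorial : ℝ) * Real.sqrt Real.pi))⁻¹ *
        Real.exp (-a ^ 2 / 2) * H k a *
        ((Real.sqrt ((2 : ℝ) ^ k * (k.factorial : ℝ) * Real.sqrt Real.pi))⁻¹ *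
         Real.exp (-b ^ 2 / 2) * H k b)
      = ((Real.sqrt ((2 : ℝ) ^ k * (k.factorial : ℝ) * Real.sqrt Real.pi))⁻¹ *
        (Real.sqrt ((2 : ℝ) ^ k * (k.factorial : ℝ) * Real.sqrt Real.pi))⁻¹) *
        (Real.exp (-a ^ 2 / 2) * Real.exp (-b ^ 2 / 2)) * (H k a * H k b) := by ring
    _ = _ := by rw [key, he]; ring

lemma psi_zero_pos (a : ℝ) : 0 < ψ 0 a := by
  unfold ψ
  rw [H_zero]
  have hpi : (0:ℝ) < Real.sqrt Real.pi := Real.sqrt_pos.mpr Real.pi_pos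
  positivity

theorem hermite_transform_orthogonal_factorization (N : ℕ) (hN : 1 ≤ N)
    (x : Fin N → ℝ) (hmono : StrictMono x)
    (hroots : ∀ k, H N (x k) = 0)
    (T D Q : Matrix (Fin N) (Fin N) ℝ)
    (hT : ∀ i j, T i j = ψ (j : ℕ) (x i))
    (hD : D = Matrix.diagonal fun j => Real.sqrt N * |ψ (N - 1) (x j)|)
    (hQ : ∀ k j, Q k j = ψ (k : ℕ) (x j)
        / (Real.sqrt N * |ψ (N - 1) (x j)|)) :
    Q.transpose * Q = 1 ∧ T = D * Q.transpose ∧ T⁻¹ = Q * D⁻¹ := by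
  obtain ⟨M, rfl⟩ : ∃ M, N = M + 1 := ⟨N - 1, (Nat.succ_pred_eq_of_pos hN).symm⟩
  simp only [Nat.add_sub_cancel] at hD hQ
  -- the key sum identity
  have hsum : ∀ i j : Fin (M + 1),
      ∑ k ∈ Finset.range (M + 1), ψ k (x i) * ψ k (x j) =
        if i = j then ((M : ℝ) + 1) * (ψ M (x i) * ψ M (x i)) else 0 := by
    intro i j
    have hE : ∀ k, ψ k (x i) * ψ k (x j) =
        (Real.sqrt Real.pi)⁻¹ * Real.exp (-((x i) ^ 2 + (x j) ^ 2) / 2) *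
          (hc k * (H k (x i) * H k (x j))) := fun k => psi_mul k (x i) (x j)
    rw [Finset.sum_congr rfl fun k _ => hE k, ← Finset.mul_sum]
    by_cases h : i = j
    · subst h
      simp only [if_pos rfl]
      have hC := CDc M (x i)
      have hr := hroots i
      rw [show (∑ k ∈ Finset.range (M + 1), hc k * (H k (x i) * H k (x i)))
          = ∑ k ∈ Finset.range (M + 1), hc k * (H k (x i)) ^ 2 by
            exact Finset.sum_congr rfl fun k _ => by ring, hC, hr]
      rw [psi_mul M (x i) (x i)]
      ring_nf
      simp
    · simp only [if_neg h]
      have hxne : x i - x j ≠ 0 :=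
        sub_ne_zero.mpr (fun hE' => h (hmono.injective hE'))
      have hC := CD M (x i) (x j)
      rw [hroots i, hroots j] at hC
      simp only [zero_mul, mul_zero, sub_zero, zero_sub, mul_zero] at hC
      have : (∑ k ∈ Finset.range (M + 1), hc k * H k (x i) * H k (x j)) = 0 := by
        rcases mul_eq_zero.mp hC with h' | h'
        · exact absurd h' hxne
        · exact h'
      rw [show (∑ k ∈ Finset.range (M + 1), hc k * (H k (x i) * H k (x j)))
          = ∑ k ∈ Finset.range (M + 1), hc k * H k (x i) * H k (x j) by
            exact Finset.sum_congr rfl fun k _ => by ring, this, mul_zero]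
  -- ψ M nonvanishing at the nodes
  have hne : ∀ j : Fin (M + 1), ψ M (x j) ≠ 0 := by
    intro j hzero
    have h0 := hsum j j
    rw [if_pos rfl, hzero] at h0
    have hle : ψ 0 (x j) * ψ 0 (x j) ≤
        ∑ k ∈ Finset.range (M + 1), ψ k (x j) * ψ k (x j) := by
      refine Finset.single_le_sum (f := fun k => ψ k (x j) * ψ k (x j))
        (fun k _ => mul_self_nonneg _) (Finset.mem_range.mpr (Nat.succ_pos M))
    have hpos := psi_zero_pos (x j)
    nlinarith
  -- the diagonal entries
  set d : Fin (M + 1) → ℝ := fun j => Real.sqrt ((M + 1 : ℕ) : ℝ) * |ψ M (x j)| with hd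
  have hdpos : ∀ j, 0 < d j := by
    intro j
    have : (0:ℝ) < Real.sqrt ((M + 1 : ℕ) : ℝ) := Real.sqrt_pos.mpr (by positivity)
    exact mul_pos this (abs_pos.mpr (hne j))
  have hdsq : ∀ j, d j * d j = ((M : ℝ) + 1) * (ψ M (x j) * ψ M (x j)) := by
    intro j
    have h1 : Real.sqrt ((M + 1 : ℕ) : ℝ) * Real.sqrt ((M + 1 : ℕ) : ℝ) = ((M + 1 : ℕ) : ℝ) :=
      Real.mul_self_sqrt (by positivity)
    have h2 : |ψ M (x j)| * |ψ M (x j)| = ψ M (x j) * ψ M (x j) := abs_mul_abs_self _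
    calc d j * d j = (Real.sqrt ((M + 1 : ℕ) : ℝ) * Real.sqrt ((M + 1 : ℕ) : ℝ)) *
        (|ψ M (x j)| * |ψ M (x j)|) := by rw [hd]; ring
      _ = _ := by rw [h1, h2]; push_cast; ring
  -- orthogonality
  have hQtQ : Q.transpose * Q = 1 := by
    ext j j'
    rw [Matrix.mul_apply, Matrix.one_apply]
    simp only [Matrix.transpose_apply, hQ]
    have : ∀ k : Fin (M + 1),
        ψ (k : ℕ) (x j) / (Real.sqrt (↑(M + 1)) * |ψ M (x j)|) *
          (ψ (k : ℕ) (x j') / (Real.sqrt (↑(M + 1)) * |ψ M (x j')|)) =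
        (ψ (k : ℕ) (x j) * ψ (k : ℕ) (x j')) / (d j * d j') := by
      intro k
      rw [div_mul_div_comm, hd]
    rw [Finset.sum_congr rfl fun k _ => this k, ← Finset.sum_div]
    rw [Fin.sum_univ_eq_sum_range (fun k => ψ k (x j) * ψ k (x j')), hsum j j']
    by_cases h : j = j'
    · subst h
      rw [if_pos rfl, if_pos rfl, hdsq j, div_self]
      have := hdpos j
      nlinarith [hdsq j]
    · rw [if_neg h, if_neg h, zero_div]
  refine ⟨hQtQ, ?_, ?_⟩
  · ext i j
    rw [hD, hT]
    rw [show (Matrix.diagonal fun j => Real.sqrt (↑(M + 1)) * |ψ M (x j)|) *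
        Q.transpose = _ from rfl, Matrix.diagonal_mul]
    rw [Matrix.transpose_apply, hQ]
    rw [mul_div_cancel₀]
    exact ne_of_gt (hdpos i)
  · have hT' : T = D * Q.transpose := by
      ext i j
      rw [hD, hT, Matrix.diagonal_mul, Matrix.transpose_apply, hQ,
        mul_div_cancel₀]
      exact ne_of_gt (hdpos i)
    rw [hT', Matrix.mul_inv_rev, Matrix.inv_eq_right_inv hQtQ]
end
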